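/- Let g = s_{5,13}^{α,-α,γ} × R (with real parameters 0 < γ < 1 and 0 ≤ α) be the 6-dimensional Lie algebra with structure equations (α e^{15} + e^{25}, -e^{15} + α e^{25}, -α e^{35} + γ e^{45}, -γ e^{35} - α e^{45}, 0, 0). Then the endomorphism J with J e1 = -e2, J e2 = e1, J e3 = e4, J e4 = -e3, J e5 = e6, J e6 = -e5 satisfies J^2 = -Id and N_J ≡ 0, and its Koszul form is ψ = -2(γ - 1) e^5 up to sign; in particular ψ vanishes on the commutator ideal [g,g] = span{e1,e2,e3,e4}. -/
import Mathlib


namespace Stmt5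

abbrev V : Type := Fin 6 → ℝ

/-- standard basis -/
noncomputable def e (i : Fin 6) : V := Pi.single i 1

/-- the Lie bracket (depending on the real parameters) -/
def br (α γ : ℝ) (x y : V) : V := fun k =>
  match k with
  | 0 => -α * (x 0 * y 4 - x 4 * y 0) - (x 1 * y 4 - x 4 * y 1)
  | 1 => (x 0 * y 4 - x 4 * y 0) - α * (x 1 * y 4 - x 4 * y 1)
  | 2 => α * (x 2 * y 4 - x 4 * y 2) - γ * (x 3 * y 4 - x 4 * y 3)
  | 3 => γ * (x 2 * y 4 - x 4 * y 2) + α * (x 3 * y 4 - x 4 * y 3)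
  | 4 => 0
  | 5 => 0

/-- the adjoint operator `ad x = [x, ·]` as a linear endomorphism -/
noncomputable def ad (α γ : ℝ) (x : V) : V →ₗ[ℝ] V where
  toFun := br α γ x
  map_add' := by intro a b; funext k; fin_cases k <;> simp [br] <;> ring
  map_smul' := by intro c a; funext k; fin_cases k <;> simp [br] <;> ring

/-- the Nijenhuis tensor of an endomorphism `J` -/
noncomputable def nijenhuis (α γ : ℝ) (J : V →ₗ[ℝ] V) (x y : V) : V :=
  br α γ x y + J (br α γ (J x) y + br α γ x (J y)) - br α γ (J x) (J y)

/-- the Koszul 1-form `ψ(x) = Tr(J ∘ ad x) - Tr(ad (J x))` -/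
noncomputable def psi (α γ : ℝ) (J : V →ₗ[ℝ] V) (x : V) : ℝ :=
  LinearMap.trace ℝ V (J ∘ₗ ad α γ x) - LinearMap.trace ℝ V (ad α γ (J x))

noncomputable def Jmap : V →ₗ[ℝ] V where
  toFun := fun x k =>
    match k with
    | 0 => x 1
    | 1 => -x 0
    | 2 => -x 3
    | 3 => x 2
    | 4 => -x 5
    | 5 => x 4
  map_add' := by intro a b; funext k; fin_cases k <;> simp <;> ring
  map_smul' := by intro c a; funext k; fin_cases k <;> simp <;> ring

lemma trace_eq (f : V →ₗ[ℝ] V) :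
    LinearMap.trace ℝ V f = ∑ i : Fin 6, f (Pi.single i 1) i := by
  rw [LinearMap.trace_eq_matrix_trace ℝ (Pi.basisFun ℝ (Fin 6)), Matrix.trace]
  simp [LinearMap.toMatrix_apply, Matrix.diag]

/-- on `s_{5,13}^{α,-α,γ} × ℝ` (with `0 < γ < 1`, `0 ≤ α`) the structure
`J e1 = -e2, J e3 = e4, J e5 = e6` is integrable, with Koszul form `ψ = 2(γ-1) e^5`;
in particular `ψ` vanishes on `[g,g]`. -/
theorem stmt_5 (α γ : ℝ) (hα : 0 ≤ α) (hγ0 : 0 < γ) (hγ1 : γ < 1) :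
    ∃ J : V →ₗ[ℝ] V,
      J (e 0) = -e 1 ∧ J (e 1) = e 0 ∧ J (e 2) = e 3 ∧ J (e 3) = -e 2 ∧
      J (e 4) = e 5 ∧ J (e 5) = -e 4 ∧
      (∀ x : V, J (J x) = -x) ∧
      (∀ x y : V, nijenhuis α γ J x y = 0) ∧
      psi α γ J (e 4) = 2 * (γ - 1) ∧
      psi α γ J (e 0) = 0 ∧ psi α γ J (e 1) = 0 ∧ psi α γ J (e 2) = 0 ∧
      psi α γ J (e 3) = 0 ∧ psi α γ J (e 5) = 0 ∧
      (∀ x y : V, psi α γ J (br α γ x y) = 0) := by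
  refine ⟨Jmap, ?_, ?_, ?_, ?_, ?_, ?_, ?_, ?_, ?_, ?_, ?_, ?_, ?_, ?_, ?_⟩
  · funext k; fin_cases k <;> simp [Jmap, e, Pi.single_apply]
  · funext k; fin_cases k <;> simp [Jmap, e, Pi.single_apply]
  · funext k; fin_cases k <;> simp [Jmap, e, Pi.single_apply]
  · funext k; fin_cases k <;> simp [Jmap, e, Pi.single_apply]
  · funext k; fin_cases k <;> simp [Jmap, e, Pi.single_apply]
  · funext k; fin_cases k <;> simp [Jmap, e, Pi.single_apply]
  · intro x; funext k; fin_cases k <;> simp [Jmap]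
  · intro x y; funext k
    fin_cases k <;>
      simp [nijenhuis, br, Jmap, LinearMap.coe_mk, AddHom.coe_mk, Pi.add_apply,
        Pi.sub_apply] <;> ring
  · simp [psi, trace_eq, Fin.sum_univ_six, Jmap, ad, br, e, Pi.single_apply]; ring
  · simp [psi, trace_eq, Fin.sum_univ_six, Jmap, ad, br, e, Pi.single_apply]
  · simp [psi, trace_eq, Fin.sum_univ_six, Jmap, ad, br, e, Pi.single_apply]
  · simp [psi, trace_eq, Fin.sum_univ_six, Jmap, ad, br, e, Pi.single_apply]
  · simp [psi, trace_eq, Fin.sum_univ_six, Jmap, ad, br, e, Pi.single_apply]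
  · simp [psi, trace_eq, Fin.sum_univ_six, Jmap, ad, br, e, Pi.single_apply]
  · intro x y
    simp [psi, trace_eq, Fin.sum_univ_six, Jmap, ad, br, Pi.single_apply]


end Stmt5
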